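/- Let n,d ≥ 2 be integers, f ∈ H, v ∈ ℂⁿ∖{0}, λ ∈ ℂ, and suppose the restriction of DF_f(v,λ) to v^⊥×ℂ is invertible. Then for every s ∈ ℂ^×, the restriction of DF_{s^{d−1}f}(v,sλ) to v^⊥×ℂ is invertible and μ̂(s^{d−1}f, v, sλ) = μ̂(f, v, λ). -/

import Mathlib

noncomputable section

open scoped BigOperators

/-- `ℂⁿ` with the hermitian (L2) norm. -/
abbrev Cn (n : ℕ) : Type := EuclideanSpace ℂ (Fin n)

/-- `ℂⁿ × ℂ` with the hermitian (L2) norm. -/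
abbrev CnC (n : ℕ) : Type := WithLp 2 (EuclideanSpace ℂ (Fin n) × ℂ)

/-- The pair `(v, η) ∈ ℂⁿ × ℂ`. -/
def mkPair {n : ℕ} (v : Cn n) (η : ℂ) : CnC n := (WithLp.equiv 2 (Cn n × ℂ)).symm (v, η)

/-- Squared Bombieri-Weyl norm of a polynomial of degree `d` in `n` variables:
for `p = ∑ a_α √(d choose α) X^α` it equals `∑ |a_α|²`, i.e.
`∑ |coeff α p|² * α! / d!`. -/
def bwNormSq (n d : ℕ) (p : MvPolynomial (Fin n) ℂ) : ℝ :=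
  ∑ α ∈ p.support,
    (‖p.coeff α‖) ^ 2 * (∏ j, Nat.factorial (α j) : ℝ) / (Nat.factorial d : ℝ)

/-- Bombieri-Weyl norm of a system of `n` polynomials. -/
def bwNorm (n d : ℕ) (f : Fin n → MvPolynomial (Fin n) ℂ) : ℝ :=
  Real.sqrt (∑ i, bwNormSq n d (f i))

/-- Real part of the Bombieri-Weyl inner product of two systems. -/
def bwInnerRe (n d : ℕ) (f g : Fin n → MvPolynomial (Fin n) ℂ) : ℝ :=
  ∑ i, ∑ α ∈ (f i).support ∪ (g i).support,
    ((f i).coeff α * (starRingEnd ℂ) ((g i).coeff α)).re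
      * (∏ j, Nat.factorial (α j) : ℝ) / (Nat.factorial d : ℝ)

/-- Spherical (angular) distance of two systems w.r.t. the Bombieri-Weyl inner product. -/
def dSH (n d : ℕ) (f g : Fin n → MvPolynomial (Fin n) ℂ) : ℝ :=
  Real.arccos (bwInnerRe n d f g / (bwNorm n d f * bwNorm n d g))

/-- The map `F_f : ℂⁿ × ℂ → ℂⁿ`, `(X, Λ) ↦ f(X) - Λ^{d-1} X`. -/
def FF (n d : ℕ) (f : Fin n → MvPolynomial (Fin n) ℂ) (w : CnC n) : Cn n :=
  (WithLp.equiv 2 (Fin n → ℂ)).symm fun i =>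
    MvPolynomial.eval (fun j => ((WithLp.equiv 2 (Cn n × ℂ)) w).1 j) (f i)
      - ((WithLp.equiv 2 (Cn n × ℂ)) w).2 ^ (d - 1) * ((WithLp.equiv 2 (Cn n × ℂ)) w).1 i

/-- The hermitian orthogonal complement of `ℂ·w` in `ℂⁿ × ℂ`. -/
def perp {n : ℕ} (w : CnC n) : Submodule ℂ (CnC n) := (ℂ ∙ w)ᗮ

/-- The derivative `DF_f(w)` restricted to the subspace `u^⊥`. -/
def DFr (n d : ℕ) (f : Fin n → MvPolynomial (Fin n) ℂ) (w u : CnC n) :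
    perp u →L[ℂ] Cn n :=
  (fderiv ℂ (FF n d f) w).comp (perp u).subtypeL

/-- `DF_f(w)|_{u^⊥}` is invertible (as a map onto `ℂⁿ`). -/
def RestrInvertible (n d : ℕ) (f : Fin n → MvPolynomial (Fin n) ℂ) (w u : CnC n) : Prop :=
  (DFr n d f w u).IsInvertible

/-- The condition number `μ(f, v, λ) = ‖v‖^{d-1} ‖(DF_f(v,λ)|_{(v,λ)^⊥})⁻¹‖`
(the value is meaningful whenever the restriction is invertible). -/
def mu (n d : ℕ) (f : Fin n → MvPolynomial (Fin n) ℂ) (w : CnC n) : ℝ :=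
  ‖((WithLp.equiv 2 (Cn n × ℂ)) w).1‖ ^ (d - 1) * ‖(DFr n d f w w).inverse‖

/-- The block-diagonal map `diag(c·I_n, c')` on `ℂⁿ × ℂ`. -/
def diagMap (n : ℕ) (c c' : ℂ) : CnC n →L[ℂ] CnC n :=
  (((WithLp.prodContinuousLinearEquiv 2 ℂ (Cn n) ℂ).symm :
      (Cn n × ℂ) →L[ℂ] CnC n).comp
    (((c • ContinuousLinearMap.id ℂ (Cn n)).prodMap
        (c' • ContinuousLinearMap.id ℂ ℂ)).comp
      ((WithLp.prodContinuousLinearEquiv 2 ℂ (Cn n) ℂ) : CnC n →L[ℂ] (Cn n × ℂ))))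

/-- The condition number
`μ̂(f,v,λ) = ‖diag(‖f‖ I_n, ‖f‖^{(d-2)/(d-1)}) ∘ (DF_f(v,λ)|_{v^⊥×ℂ})⁻¹‖`
(the value is meaningful whenever the restriction is invertible);
here `v^⊥ × ℂ = (v,0)^⊥`. -/
def muHat (n d : ℕ) (f : Fin n → MvPolynomial (Fin n) ℂ) (v : Cn n) (lam : ℂ) : ℝ :=
  ‖(diagMap n ((bwNorm n d f : ℝ) : ℂ)
      (((bwNorm n d f) ^ (((d : ℝ) - 2) / ((d : ℝ) - 1)) : ℝ) : ℂ)).comp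
    (((perp (mkPair v 0)).subtypeL).comp
      (DFr n d f (mkPair v lam) (mkPair v 0)).inverse)‖

/-- Smale's `γ(f, ζ, η)`:
`‖(ζ,η)‖ · sup_{k ≥ 2} ‖(DF_f(ζ,η)|_{(ζ,η)^⊥})⁻¹ ∘ (1/k!) D^k F_f(ζ,η)‖^{1/(k-1)}`. -/
def gammaF (n d : ℕ) (f : Fin n → MvPolynomial (Fin n) ℂ) (w : CnC n) : ℝ :=
  ‖w‖ * ⨆ k : ℕ, if 2 ≤ k then
      ‖((DFr n d f w w).inverse).compContinuousMultilinearMap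
          (((Nat.factorial k : ℂ))⁻¹ • iteratedFDeriv ℂ k (FF n d f) w)‖
        ^ ((1 : ℝ) / ((k : ℝ) - 1))
    else 0

/-- Projective distance `d_P(x,y) = arccos(|⟨x,y⟩| / (‖x‖ ‖y‖))`. -/
def dProj {E : Type} [NormedAddCommGroup E] [InnerProductSpace ℂ E] (x y : E) : ℝ :=
  Real.arccos (‖(inner ℂ x y : ℂ)‖ / (‖x‖ * ‖y‖))

/-- Spherical distance `d_S(x,y) = arccos(Re⟨x,y⟩ / (‖x‖ ‖y‖))` for complex vectors
viewed as real vectors. -/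
def dSph {E : Type} [NormedAddCommGroup E] [InnerProductSpace ℂ E] (x y : E) : ℝ :=
  Real.arccos ((inner ℂ x y : ℂ).re / (‖x‖ * ‖y‖))

/-- Spherical distance in a real inner product space. -/
def dSphR {E : Type} [NormedAddCommGroup E] [InnerProductSpace ℝ E] (x y : E) : ℝ :=
  Real.arccos ((inner ℝ x y : ℝ) / (‖x‖ * ‖y‖))

end

/-! The identity `F_{s^{d-1} f}(X, Λ) = s^{d-1} F_f(X, s⁻¹ Λ)` gives
`DF_{s^{d-1} f}(v, s λ) = DF_f(v, λ) ∘ diag(s^{d-1}, s^{d-2})`. The block-diagonal factor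
preserves `v^⊥ × ℂ`, so the restriction stays invertible and its inverse picks up the factor
`diag(s^{-(d-1)}, s^{-(d-2)})`. Since `‖s^{d-1} f‖ = |s|^{d-1} ‖f‖` and
`(|s|^{d-1})^{(d-2)/(d-1)} = |s|^{d-2}`, the weights of `μ̂` cancel these factors up to
unimodular constants, which do not change the operator norm. -/

open ContinuousLinearMap

lemma withLp_prod_ext {α β : Type*} {p : ENNReal} {x y : WithLp p (α × β)}
    (h₁ : x.fst = y.fst) (h₂ : x.snd = y.snd) : x = y :=
  WithLp.ofLp_injective p (Prod.ext h₁ h₂)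

lemma pow_sub_one_rpow_sub_two_div {d : ℕ} (hd : 2 ≤ d) {t : ℝ} (ht : 0 ≤ t) :
    (t ^ (d - 1)) ^ (((d : ℝ) - 2) / ((d : ℝ) - 1)) = t ^ (d - 2) := by
  obtain ⟨k, rfl⟩ : ∃ k, d = k + 2 := ⟨d - 2, by omega⟩
  rw [← Real.rpow_natCast, ← Real.rpow_mul ht, ← Real.rpow_natCast]
  congr 1
  have hk : (k : ℝ) + 2 - 1 ≠ 0 := by linarith [k.cast_nonneg (α := ℝ)]
  push_cast [show k + 2 - 1 = k + 1 by omega]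
  field_simp
  ring

section DiagMap

variable {n : ℕ}

@[simp] lemma diagMap_fst (c c' : ℂ) (w : CnC n) : (diagMap n c c' w).fst = c • w.fst := rfl

@[simp] lemma diagMap_snd (c c' : ℂ) (w : CnC n) : (diagMap n c c' w).snd = c' • w.snd := rfl

lemma diagMap_diagMap (a b a' b' : ℂ) (w : CnC n) :
    diagMap n a b (diagMap n a' b' w) = diagMap n (a * a') (b * b') w :=
  withLp_prod_ext (by simp only [diagMap_fst, smul_smul]) (by simp only [diagMap_snd, smul_smul])

lemma diagMap_one_one_apply (w : CnC n) : diagMap n 1 1 w = w :=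
  withLp_prod_ext (by simp) (by simp)

lemma smul_diagMap (a b c : ℂ) (w : CnC n) : c • diagMap n a b w = diagMap n (c * a) (c * b) w :=
  withLp_prod_ext (by simp only [WithLp.smul_fst, diagMap_fst, smul_smul])
    (by simp only [WithLp.smul_snd, diagMap_snd, smul_smul])

lemma diagMap_one_inv_mkPair {s : ℂ} (hs : s ≠ 0) (v : Cn n) (lam : ℂ) :
    diagMap n 1 s⁻¹ (mkPair v (s * lam)) = mkPair v lam :=
  withLp_prod_ext (one_smul ℂ v) (inv_mul_cancel_left₀ hs lam)

lemma norm_diagMap_sq (a b : ℂ) (w : CnC n) :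
    ‖diagMap n a b w‖ ^ 2 = ‖a‖ ^ 2 * ‖w.fst‖ ^ 2 + ‖b‖ ^ 2 * ‖w.snd‖ ^ 2 := by
  simp [WithLp.prod_norm_sq_eq_of_L2, norm_smul, mul_pow]

lemma norm_diagMap_congr {a b a' b' : ℂ} (ha : ‖a‖ = ‖a'‖) (hb : ‖b‖ = ‖b'‖) (w : CnC n) :
    ‖diagMap n a b w‖ = ‖diagMap n a' b' w‖ := by
  rw [← sq_eq_sq₀ (norm_nonneg _) (norm_nonneg _), norm_diagMap_sq, norm_diagMap_sq, ha, hb]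

lemma mem_perp_mkPair_zero_iff (v : Cn n) (x : CnC n) :
    x ∈ perp (mkPair v 0) ↔ inner ℂ v x.fst = 0 := by
  simp [perp, Submodule.mem_orthogonal_singleton_iff_inner_right, WithLp.prod_inner_apply, mkPair]

lemma diagMap_mem_perp (v : Cn n) (a b : ℂ) {x : CnC n} (hx : x ∈ perp (mkPair v 0)) :
    diagMap n a b x ∈ perp (mkPair v 0) := by
  simp_all [mem_perp_mkPair_zero_iff]

noncomputable def perpDiag (v : Cn n) {a b : ℂ} (ha : a ≠ 0) (hb : b ≠ 0) :
    perp (mkPair v 0) ≃L[ℂ] perp (mkPair v 0) :=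
  ContinuousLinearEquiv.equivOfInverse
    ((diagMap n a b).restrict fun _ => diagMap_mem_perp v a b)
    ((diagMap n a⁻¹ b⁻¹).restrict fun _ => diagMap_mem_perp v a⁻¹ b⁻¹)
    (fun x => Subtype.ext <| by simp [diagMap_diagMap, ha, hb, diagMap_one_one_apply])
    (fun x => Subtype.ext <| by simp [diagMap_diagMap, ha, hb, diagMap_one_one_apply])

@[simp] lemma coe_perpDiag (v : Cn n) {a b : ℂ} (ha : a ≠ 0) (hb : b ≠ 0)
    (x : perp (mkPair v 0)) : (perpDiag v ha hb x : CnC n) = diagMap n a b x := rfl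

end DiagMap

section BombieriWeyl

variable {n d : ℕ}

lemma bwNorm_nonneg (f : Fin n → MvPolynomial (Fin n) ℂ) : 0 ≤ bwNorm n d f := Real.sqrt_nonneg _

lemma bwNormSq_smul (c : ℂ) (p : MvPolynomial (Fin n) ℂ) :
    bwNormSq n d (c • p) = ‖c‖ ^ 2 * bwNormSq n d p := by
  rcases eq_or_ne c 0 with rfl | hc
  · simp [bwNormSq]
  rw [bwNormSq, bwNormSq, MvPolynomial.support_smul_eq hc, Finset.mul_sum]
  refine Finset.sum_congr rfl fun α _ => ?_
  rw [MvPolynomial.coeff_smul, smul_eq_mul, norm_mul, mul_pow]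
  ring

lemma bwNorm_smul (c : ℂ) (f : Fin n → MvPolynomial (Fin n) ℂ) :
    bwNorm n d (fun i => c • f i) = ‖c‖ * bwNorm n d f := by
  simp only [bwNorm, bwNormSq_smul, ← Finset.mul_sum, Real.sqrt_mul (sq_nonneg _),
    Real.sqrt_sq (norm_nonneg c)]

lemma norm_bwNorm_smul_pow_mul_inv {s : ℂ} (hs : s ≠ 0) (f : Fin n → MvPolynomial (Fin n) ℂ) :
    ‖((bwNorm n d fun i => s ^ (d - 1) • f i : ℝ) : ℂ) * (s ^ (d - 1))⁻¹‖ = bwNorm n d f := by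
  rw [bwNorm_smul, norm_mul, norm_inv, Complex.norm_real,
    Real.norm_of_nonneg (mul_nonneg (norm_nonneg _) (bwNorm_nonneg f))]
  field_simp [norm_ne_zero_iff.2 hs]

lemma norm_bwNorm_smul_pow_rpow_mul_inv {s : ℂ} (hs : s ≠ 0) (hd : 2 ≤ d)
    (f : Fin n → MvPolynomial (Fin n) ℂ) :
    ‖(((bwNorm n d fun i => s ^ (d - 1) • f i) ^ (((d : ℝ) - 2) / ((d : ℝ) - 1)) : ℝ) : ℂ)
        * (s ^ (d - 1) * s⁻¹)⁻¹‖ = bwNorm n d f ^ (((d : ℝ) - 2) / ((d : ℝ) - 1)) := by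
  rw [bwNorm_smul, norm_pow, Real.mul_rpow (by positivity) (bwNorm_nonneg f),
    pow_sub_one_rpow_sub_two_div hd (norm_nonneg s), mul_inv, inv_inv, ← mul_assoc, norm_mul,
    norm_mul, norm_inv, Complex.norm_real, norm_pow,
    Real.norm_of_nonneg (mul_nonneg (by positivity) (Real.rpow_nonneg (bwNorm_nonneg f) _))]
  obtain ⟨k, rfl⟩ : ∃ k, d = k + 2 := ⟨d - 2, by omega⟩
  simp only [Nat.add_sub_cancel, show k + 2 - 1 = k + 1 by omega, pow_succ]
  field_simp [norm_ne_zero_iff.2 hs]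

lemma norm_diagMap_bwNorm_smul_pow (hd : 2 ≤ d) {s : ℂ} (hs : s ≠ 0)
    (f : Fin n → MvPolynomial (Fin n) ℂ) (x : CnC n) :
    ‖diagMap n ((bwNorm n d fun i => s ^ (d - 1) • f i : ℝ) : ℂ)
        (((bwNorm n d fun i => s ^ (d - 1) • f i) ^ (((d : ℝ) - 2) / ((d : ℝ) - 1)) : ℝ) : ℂ)
        (diagMap n (s ^ (d - 1))⁻¹ (s ^ (d - 1) * s⁻¹)⁻¹ x)‖
      = ‖diagMap n ((bwNorm n d f : ℝ) : ℂ)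
          (((bwNorm n d f) ^ (((d : ℝ) - 2) / ((d : ℝ) - 1)) : ℝ) : ℂ) x‖ := by
  rw [diagMap_diagMap]
  refine norm_diagMap_congr ?_ ?_ x
  · rw [norm_bwNorm_smul_pow_mul_inv hs, Complex.norm_real, Real.norm_of_nonneg (bwNorm_nonneg f)]
  · rw [norm_bwNorm_smul_pow_rpow_mul_inv hs hd, Complex.norm_real,
      Real.norm_of_nonneg (Real.rpow_nonneg (bwNorm_nonneg f) _)]

end BombieriWeyl

section Derivative

variable {n d : ℕ}

-- Instance search for this times out.
instance (n : ℕ) : ContinuousSMul ℂ (CnC n) := IsBoundedSMul.continuousSMul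

lemma differentiable_FF (f : Fin n → MvPolynomial (Fin n) ℂ) : Differentiable ℂ (FF n d f) := by
  let coord : Fin n → CnC n →L[ℂ] ℂ := fun j =>
    (EuclideanSpace.proj j).comp (WithLp.fstL 2 ℂ (Cn n) ℂ)
  have heval : ∀ p : MvPolynomial (Fin n) ℂ,
      Differentiable ℂ fun w : CnC n => MvPolynomial.eval (fun j => coord j w) p := fun p w =>
    (AnalyticOnNhd.eval_continuousLinearMap' coord p w trivial).differentiableAt
  have hsnd : Differentiable ℂ fun w : CnC n => w.snd := (WithLp.sndL 2 ℂ (Cn n) ℂ).differentiable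
  exact (PiLp.continuousLinearEquiv 2 ℂ fun _ : Fin n => ℂ).symm.differentiable.comp
    (differentiable_pi.2 fun i => (heval _).sub ((hsnd.pow _).mul (coord i).differentiable))

lemma FF_smul_pow {s : ℂ} (hs : s ≠ 0) (f : Fin n → MvPolynomial (Fin n) ℂ) (w : CnC n) :
    FF n d (fun i => s ^ (d - 1) • f i) w = s ^ (d - 1) • FF n d f (diagMap n 1 s⁻¹ w) := by
  ext i
  simp only [FF, WithLp.equiv_apply, WithLp.ofLp_fst, MvPolynomial.smul_eval, WithLp.ofLp_snd,
    WithLp.equiv_symm_apply, diagMap_fst, one_smul, diagMap_snd, smul_eq_mul, mul_pow, inv_pow,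
    PiLp.smul_apply, mul_sub, sub_right_inj]
  field_simp

lemma fderiv_FF_smul_pow {s : ℂ} (hs : s ≠ 0) (f : Fin n → MvPolynomial (Fin n) ℂ) (w : CnC n) :
    fderiv ℂ (FF n d fun i => s ^ (d - 1) • f i) w
      = s ^ (d - 1) • (fderiv ℂ (FF n d f) (diagMap n 1 s⁻¹ w)).comp (diagMap n 1 s⁻¹) := by
  rw [funext (FF_smul_pow hs f)]
  exact ((differentiable_FF f _).hasFDerivAt.comp w
    (diagMap n 1 s⁻¹).hasFDerivAt).fun_const_smul (s ^ (d - 1)) |>.fderiv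

lemma DFr_smul_pow {s : ℂ} (hs : s ≠ 0) (f : Fin n → MvPolynomial (Fin n) ℂ) (v : Cn n)
    (lam : ℂ) :
    DFr n d (fun i => s ^ (d - 1) • f i) (mkPair v (s * lam)) (mkPair v 0)
      = DFr n d f (mkPair v lam) (mkPair v 0)
        ∘L (perpDiag v (pow_ne_zero (d - 1) hs)
          (mul_ne_zero (pow_ne_zero (d - 1) hs) (inv_ne_zero hs)) : _ →L[ℂ] _) := by
  ext1 x
  simp only [DFr, fderiv_FF_smul_pow hs, diagMap_one_inv_mkPair hs, smul_apply, comp_apply,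
    Submodule.coe_subtypeL, Submodule.subtype_apply, ContinuousLinearEquiv.coe_coe, coe_perpDiag]
  rw [← map_smul, smul_diagMap, mul_one]

end Derivative

theorem muHat_scale_invariant_general (n d : ℕ) (hd : 2 ≤ d)
    (f : Fin n → MvPolynomial (Fin n) ℂ)
    (v : Cn n) (lam : ℂ)
    (hinv : RestrInvertible n d f (mkPair v lam) (mkPair v 0)) :
    ∀ s : ℂ, s ≠ 0 →
      RestrInvertible n d (fun i => s ^ (d - 1) • f i) (mkPair v (s * lam)) (mkPair v 0) ∧
      muHat n d (fun i => s ^ (d - 1) • f i) v (s * lam) = muHat n d f v lam := by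
  intro s hs
  have hDF := DFr_smul_pow (d := d) hs f v lam
  refine ⟨?_, ?_⟩
  · rw [RestrInvertible, hDF, isInvertible_comp_equiv]
    exact hinv
  · rw [muHat, muHat, hDF, inverse_comp_equiv]
    exact opNorm_ext _ _ fun y => norm_diagMap_bwNorm_smul_pow hd hs f _

theorem muHat_scale_invariant (n d : ℕ) (hn : 2 ≤ n) (hd : 2 ≤ d)
    (f : Fin n → MvPolynomial (Fin n) ℂ) (hhom : ∀ i, (f i).IsHomogeneous d)
    (v : Cn n) (hv : v ≠ 0) (lam : ℂ)
    (hinv : RestrInvertible n d f (mkPair v lam) (mkPair v 0)) :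
    ∀ s : ℂ, s ≠ 0 →
      RestrInvertible n d (fun i => s ^ (d - 1) • f i) (mkPair v (s * lam)) (mkPair v 0) ∧
      muHat n d (fun i => s ^ (d - 1) • f i) v (s * lam) = muHat n d f v lam :=
  muHat_scale_invariant_general n d hd f v lam hinv
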